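/- arXiv:2201.06405 — 5 statements merged into one kernel-verified Lean document; each statement's English description precedes it below -/
import Mathlib

section
/- Under the Distflow recursion with each V_j viewed as a function v_j of the initial voltage V_0 > 0, if V_N ≤ 2V_0 then the derivatives satisfy 0 ≤ dv_j/dV_0 ≤ 1 for all j = 0,…,N. -/
/-!
Write `u j` for `(v j)'(V₀)`. Differentiating the recursion gives
`u (j+1) = 2 u j - u (j-1) - r p j u j / (v j)²` with `u 0 = 1`, `u 1 = 1 - r p 0 / V₀²`.
By induction, as long as `0 ≤ u j ≤ 1`, the correction term `r p j u j / (v j)²` is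
nonnegative and, since `V₀ ≤ v j`, at most `(r p j / v j) / V₀`, the correction in the voltage
recursion divided by `V₀`. Hence `u` is nonincreasing while `V₀ u + v` is nondecreasing, so
`u j ≤ u 0 = 1` and `V₀ u j ≥ 2 V₀ - v j ≥ 2 V₀ - v N ≥ 0`, which keeps the induction going.
-/

open Set Filter Topology

theorem HasDerivAt.two_mul_sub_add_div {g h : ℝ → ℝ} {g' h' k x : ℝ}
    (hg : HasDerivAt g g' x) (hh : HasDerivAt h h' x) (hgx : g x ≠ 0) :
    HasDerivAt (fun y => 2 * g y - h y + k / g y) (2 * g' - h' - k * g' / g x ^ 2) x :=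
  (((hg.const_mul 2).sub hh).add ((hasDerivAt_const x k).div hg hgx)).congr_deriv
    (by ring)

theorem distflow_sensitivity_step {a c v₀ v₁ v₂ u₀ u₁ u₂ : ℝ} (ha : 0 < a) (hc : 0 ≤ c)
    (hv₁ : a ≤ v₁) (hu₁ : 0 ≤ u₁) (hu₁_le_one : u₁ ≤ 1) (hu : u₁ ≤ u₀)
    (hw : a * u₀ + v₀ ≤ a * u₁ + v₁)
    (hv₂ : v₂ = 2 * v₁ - v₀ + c / v₁) (hu₂ : u₂ = 2 * u₁ - u₀ - c * u₁ / v₁ ^ 2) :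
    u₂ ≤ u₁ ∧ a * u₁ + v₁ ≤ a * u₂ + v₂ := by
  have hv₁_pos : 0 < v₁ := ha.trans_le hv₁
  have hcorr_nonneg : 0 ≤ c * u₁ / v₁ ^ 2 := by positivity
  have hau : a * u₁ ≤ v₁ := by nlinarith
  have hcorr_le : a * (c * u₁ / v₁ ^ 2) ≤ c / v₁ := calc
    a * (c * u₁ / v₁ ^ 2) = c * (a * u₁) / v₁ ^ 2 := by ring
    _ ≤ c * v₁ / v₁ ^ 2 := by gcongr
    _ = c / v₁ := by field_simp
  subst hv₂ hu₂
  constructor <;> linarith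

/-- The voltages at a fixed initial voltage `a`, with `c j = r * p j`. -/
structure IsDistflowProfile (N : ℕ) (a : ℝ) (c v : ℕ → ℝ) : Prop where
  zero : v 0 = a
  one : v 1 = a + c 0 / a
  step : ∀ j, j + 2 ≤ N → v (j + 2) = 2 * v (j + 1) - v j + c (j + 1) / v (j + 1)

/-- `u j` stands for `(v j)'(a)`: these are the derivatives of the voltage recursion. -/
structure IsDistflowSensitivity (N : ℕ) (a : ℝ) (c v u : ℕ → ℝ) : Prop where
  zero : u 0 = 1
  one : u 1 = 1 - c 0 / a ^ 2
  step : ∀ j, j + 2 ≤ N →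
    u (j + 2) = 2 * u (j + 1) - u j - c (j + 1) * u (j + 1) / v (j + 1) ^ 2

namespace IsDistflowProfile

variable {N : ℕ} {a : ℝ} {c v u : ℕ → ℝ}

theorem le_and_le_succ (hv : IsDistflowProfile N a c v) (ha : 0 < a) (hc : ∀ j, 0 ≤ c j) :
    ∀ j, j + 1 ≤ N → a ≤ v j ∧ v j ≤ v (j + 1) := by
  intro j
  induction j with
  | zero =>
    intro _
    have : 0 ≤ c 0 / a := div_nonneg (hc 0) ha.le
    rw [hv.zero, hv.one]
    constructor <;> linarith
  | succ j ih =>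
    intro hj
    obtain ⟨ha_le, hv_le⟩ := ih (by omega)
    have : 0 ≤ c (j + 1) / v (j + 1) := div_nonneg (hc _) (by linarith)
    rw [hv.step j hj]
    constructor <;> linarith

theorem monotoneOn (hv : IsDistflowProfile N a c v) (ha : 0 < a) (hc : ∀ j, 0 ≤ c j) :
    MonotoneOn v (Iic N) :=
  monotoneOn_of_le_add_one ordConnected_Iic fun j _ _ hj => (hv.le_and_le_succ ha hc j hj).2

theorem sensitivity_nonneg_and_le_one_of_antitoneOn {n j : ℕ} (hv : IsDistflowProfile N a c v)
    (hu : IsDistflowSensitivity N a c v u) (ha : 0 < a) (hanti : AntitoneOn u (Iic n))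
    (hmono : MonotoneOn (fun k => a * u k + v k) (Iic n)) (hj : j ≤ n) (hvj : v j ≤ 2 * a) :
    0 ≤ u j ∧ u j ≤ 1 := by
  have h0 : (0 : ℕ) ∈ Iic n := Nat.zero_le n
  have hu_le : u j ≤ 1 := hu.zero ▸ hanti h0 hj (Nat.zero_le j)
  have hw : a * u 0 + v 0 ≤ a * u j + v j := hmono h0 hj (Nat.zero_le j)
  rw [hu.zero, hv.zero] at hw
  exact ⟨by nlinarith, hu_le⟩

theorem sensitivity_le_succ (hv : IsDistflowProfile N a c v)
    (hu : IsDistflowSensitivity N a c v u) (ha : 0 < a) (hc : ∀ j, 0 ≤ c j)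
    (hvN : v N ≤ 2 * a) :
    ∀ j, j + 1 ≤ N → u (j + 1) ≤ u j ∧ a * u j + v j ≤ a * u (j + 1) + v (j + 1) := by
  intro j
  induction j using Nat.strong_induction_on with
  | _ j ih =>
  intro hj
  rcases j with _ | i
  · rw [hu.zero, hu.one, hv.zero, hv.one]
    have : 0 ≤ c 0 / a ^ 2 := div_nonneg (hc 0) (sq_nonneg a)
    refine ⟨by linarith, le_of_eq ?_⟩
    field_simp
    ring
  · have hanti : AntitoneOn u (Iic (i + 1)) :=
      antitoneOn_of_add_one_le ordConnected_Iic fun k _ _ hk => (ih k hk (by simp at hk; omega)).1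
    have hmono : MonotoneOn (fun k => a * u k + v k) (Iic (i + 1)) :=
      monotoneOn_of_le_add_one ordConnected_Iic fun k _ _ hk => (ih k hk (by simp at hk; omega)).2
    have hv_le : v (i + 1) ≤ 2 * a :=
      (hv.monotoneOn ha hc (by simp; omega) (by simp) (by omega)).trans hvN
    have ha_le : a ≤ v (i + 1) :=
      hv.zero ▸ hv.monotoneOn ha hc (by simp) (by simp; omega) (Nat.zero_le _)
    obtain ⟨hu_nonneg, hu_le_one⟩ :=
      hv.sensitivity_nonneg_and_le_one_of_antitoneOn hu ha hanti hmono le_rfl hv_le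
    obtain ⟨hu_anti, hw_mono⟩ := ih i (by omega) (by omega)
    exact distflow_sensitivity_step ha (hc _) ha_le hu_nonneg hu_le_one hu_anti hw_mono
      (hv.step i hj) (hu.step i hj)

theorem sensitivity_nonneg_and_le_one (hv : IsDistflowProfile N a c v)
    (hu : IsDistflowSensitivity N a c v u) (ha : 0 < a) (hc : ∀ j, 0 ≤ c j)
    (hvN : v N ≤ 2 * a) : ∀ j ≤ N, 0 ≤ u j ∧ u j ≤ 1 := by
  intro j hj
  have hstep := hv.sensitivity_le_succ hu ha hc hvN
  exact hv.sensitivity_nonneg_and_le_one_of_antitoneOn hu ha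
    (antitoneOn_of_add_one_le ordConnected_Iic fun k _ _ hk => (hstep k hk).1)
    (monotoneOn_of_le_add_one ordConnected_Iic fun k _ _ hk => (hstep k hk).2) hj
    ((hv.monotoneOn ha hc hj self_mem_Iic hj).trans hvN)

end IsDistflowProfile

/-- Viewing each Distflow voltage `V_j` as a function `v j` of the initial voltage `V₀ > 0`,
if `v N V₀ ≤ 2 V₀` then `0 ≤ (v j)'(V₀) ≤ 1` for all `j = 0, …, N`. -/
theorem distflow_voltage_derivative_bounds (N : ℕ)
    (r : ℝ) (hr : 0 ≤ r) (p : ℕ → ℝ) (hp : ∀ j, 0 ≤ p j)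
    (v : ℕ → ℝ → ℝ)
    (hv0 : ∀ x > (0:ℝ), v 0 x = x)
    (hv1 : ∀ x > (0:ℝ), v 1 x = x + r * p 0 / x)
    (hrec : ∀ j, 1 ≤ j → j ≤ N - 1 → ∀ x > (0:ℝ),
      v (j + 1) x = 2 * v j x - v (j - 1) x + r * p j / v j x)
    (hdiff : ∀ j ≤ N, DifferentiableOn ℝ (v j) (Set.Ioi (0:ℝ)))
    (V₀ : ℝ) (hV₀ : 0 < V₀)
    (hdrop : v N V₀ ≤ 2 * V₀) :
    ∀ j ≤ N, 0 ≤ deriv (v j) V₀ ∧ deriv (v j) V₀ ≤ 1 := by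
  have hc : ∀ j, 0 ≤ r * p j := fun j => mul_nonneg hr (hp j)
  have hprofile : IsDistflowProfile N V₀ (r * p ·) (v · V₀) :=
    ⟨hv0 V₀ hV₀, hv1 V₀ hV₀, fun j hj => hrec (j + 1) (by omega) (by omega) V₀ hV₀⟩
  have hnhds : Ioi 0 ∈ 𝓝 V₀ := Ioi_mem_nhds hV₀
  have hderiv : ∀ j ≤ N, HasDerivAt (v j) (deriv (v j) V₀) V₀ := fun j hj =>
    ((hdiff j hj).differentiableAt hnhds).hasDerivAt
  have hsens : IsDistflowSensitivity N V₀ (r * p ·) (v · V₀) (fun j => deriv (v j) V₀) := by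
    refine ⟨?_, ?_, fun j hj => ?_⟩
    · rw [(eventuallyEq_of_mem hnhds hv0 : v 0 =ᶠ[𝓝 V₀] id).deriv_eq, deriv_id]
    · -- `v 1` is the recursion step from `v (-1) = v 0 = id`
      have hv1_eq : v 1 =ᶠ[𝓝 V₀] fun x => 2 * x - x + r * p 0 / x :=
        eventuallyEq_of_mem hnhds fun x hx => by rw [hv1 x hx]; ring
      have hid := hasDerivAt_id' V₀
      exact ((hid.two_mul_sub_add_div hid hV₀.ne').congr_of_eventuallyEq hv1_eq).deriv.trans
        (by ring)
    · have hvj_pos : 0 < v (j + 1) V₀ :=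
        hV₀.trans_le (hprofile.le_and_le_succ hV₀ hc (j + 1) hj).1
      have hvj_eq : v (j + 2) =ᶠ[𝓝 V₀]
          fun x => 2 * v (j + 1) x - v j x + r * p (j + 1) / v (j + 1) x :=
        eventuallyEq_of_mem hnhds fun x hx => hrec (j + 1) (by omega) (by omega) x hx
      exact (((hderiv (j + 1) (by omega)).two_mul_sub_add_div (hderiv j (by omega))
        hvj_pos.ne').congr_of_eventuallyEq hvj_eq).deriv
  exact hprofile.sensitivity_nonneg_and_le_one hsens hV₀ hc hdrop
end

section
/- Under the Distflow model, the terminal squared voltage satisfies W_{N,N} ≥ 1 + r·(p_0 + ⋯ + p_{N−1}). Consequently, if W_{N,N} ≤ (1/(1−Δ))² for some 0 < Δ ≤ 1/2, then p_0 + ⋯ + p_{N−1} ≤ (1/r)·((1/(1−Δ))² − 1) (for r > 0), so the feasible set of power allocations is bounded. -/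
/-!
With `W_{j,j} = V_j²` and `W_{j,j+1} = V_j V_{j+1}` the recursion is the exact identity
`W_{j,j+1} - W_{j,j} = (W_{j,j} - W_{j-1,j}) + r p_j`. As the voltages are `≥ 1` and nondecreasing,
`V_{j+1} (V_{j+1} - V_j) ≥ V_j (V_{j+1} - V_j) = W_{j,j+1} - W_{j,j}`, so the quantity
`V_j (V_j - V_{j-1})` grows by at least `r p_j` per step and ends above `r ∑ p`.
Then `V_N² = V_N (V_N - V_{N-1}) + V_N V_{N-1} ≥ r ∑ p + 1`.
-/

open Finset

section Distflow

variable {N : ℕ} {r : ℝ} {p V : ℕ → ℝ}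

theorem distflow_one_le_and_le_succ (hr : 0 ≤ r) (hp : ∀ j, 0 ≤ p j)
    (hV0 : V 0 = 1) (hV1 : V 1 = 1 + r * p 0)
    (hrec : ∀ j, j + 2 ≤ N → V (j + 2) = 2 * V (j + 1) - V j + r * p (j + 1) / V (j + 1)) :
    ∀ j, j + 1 ≤ N → 1 ≤ V j ∧ V j ≤ V (j + 1) := by
  intro j
  induction j with
  | zero =>
    intro _
    rw [hV0, hV1]
    exact ⟨le_rfl, le_add_of_nonneg_right (mul_nonneg hr (hp 0))⟩
  | succ j ih =>
    intro hj
    obtain ⟨hVj, hmono⟩ := ih (by omega)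
    have hdrop : 0 ≤ r * p (j + 1) / V (j + 1) :=
      div_nonneg (mul_nonneg hr (hp _)) (by linarith)
    refine ⟨hVj.trans hmono, ?_⟩
    rw [hrec j hj]
    linarith

theorem distflow_mul_sum_le_mul_sub (hr : 0 ≤ r) (hp : ∀ j, 0 ≤ p j)
    (hV0 : V 0 = 1) (hV1 : V 1 = 1 + r * p 0)
    (hrec : ∀ j, j + 2 ≤ N → V (j + 2) = 2 * V (j + 1) - V j + r * p (j + 1) / V (j + 1)) :
    ∀ j, j + 1 ≤ N → r * ∑ i ∈ range (j + 1), p i ≤ V (j + 1) * (V (j + 1) - V j) := by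
  intro j
  induction j with
  | zero =>
    intro _
    rw [sum_range_one, hV0, hV1, add_sub_cancel_left]
    nlinarith [mul_nonneg hr (hp 0)]
  | succ j ih =>
    intro hj
    obtain ⟨hVj, hmono⟩ := distflow_one_le_and_le_succ hr hp hV0 hV1 hrec (j + 1) hj
    have hcross :
        V (j + 1) * (V (j + 2) - V (j + 1)) = V (j + 1) * (V (j + 1) - V j) + r * p (j + 1) := by
      rw [hrec j hj]
      field_simp [(zero_lt_one.trans_le hVj).ne']
      ring
    calc r * ∑ i ∈ range (j + 2), p i
        = r * ∑ i ∈ range (j + 1), p i + r * p (j + 1) := by rw [sum_range_succ, mul_add]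
      _ ≤ V (j + 1) * (V (j + 1) - V j) + r * p (j + 1) := by linarith [ih (by omega)]
      _ = V (j + 1) * (V (j + 2) - V (j + 1)) := hcross.symm
      _ ≤ V (j + 2) * (V (j + 2) - V (j + 1)) :=
        mul_le_mul_of_nonneg_right hmono (sub_nonneg.mpr hmono)

theorem distflow_one_add_mul_sum_le_sq (hr : 0 ≤ r) (hp : ∀ j, 0 ≤ p j)
    (hV0 : V 0 = 1) (hV1 : V 1 = 1 + r * p 0)
    (hrec : ∀ j, j + 2 ≤ N → V (j + 2) = 2 * V (j + 1) - V j + r * p (j + 1) / V (j + 1)) :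
    1 + r * ∑ i ∈ range N, p i ≤ V N ^ 2 := by
  cases N with
  | zero => simp [hV0]
  | succ n =>
    obtain ⟨hVn, hmono⟩ := distflow_one_le_and_le_succ hr hp hV0 hV1 hrec n le_rfl
    have hcurrent := distflow_mul_sum_le_mul_sub hr hp hV0 hV1 hrec n le_rfl
    nlinarith [one_le_mul_of_one_le_of_one_le hVn (hVn.trans hmono)]

end Distflow

open Finset in
theorem distflow_total_power_bound_general (N : ℕ)
    (r : ℝ) (hr : 0 < r) (p : ℕ → ℝ) (hp : ∀ j, 0 ≤ p j)
    (V : ℕ → ℝ)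
    (hV0 : V 0 = 1) (hV1 : V 1 = 1 + r * p 0)
    (hrec : ∀ j, 1 ≤ j → j ≤ N - 1 → V (j + 1) = 2 * V j - V (j - 1) + r * p j / V j) :
    V N ^ 2 ≥ 1 + r * ∑ i ∈ range N, p i ∧
    ∀ Δ : ℝ, 0 < Δ → Δ ≤ 1 / 2 → V N ^ 2 ≤ (1 / (1 - Δ)) ^ 2 →
      ∑ i ∈ range N, p i ≤ (1 / r) * ((1 / (1 - Δ)) ^ 2 - 1) := by
  have hrec' : ∀ j, j + 2 ≤ N →
      V (j + 2) = 2 * V (j + 1) - V j + r * p (j + 1) / V (j + 1) := fun j hj =>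
    hrec (j + 1) (by omega) (by omega)
  have hbound := distflow_one_add_mul_sum_le_sq (N := N) hr.le hp hV0 hV1 hrec'
  refine ⟨hbound, fun Δ _ _ hdrop => ?_⟩
  rw [one_div_mul_eq_div, le_div_iff₀' hr]
  linarith

open Finset in
/-- Under the Distflow model the terminal squared voltage satisfies
`V_N² ≥ 1 + r (p_0 + ⋯ + p_{N-1})`; hence the voltage-drop constraint
`V_N² ≤ (1/(1-Δ))²` bounds the total power allocation. -/
theorem distflow_total_power_bound (N : ℕ) (hN : 1 ≤ N)
    (r : ℝ) (hr : 0 < r) (p : ℕ → ℝ) (hp : ∀ j, 0 ≤ p j)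
    (V : ℕ → ℝ)
    (hV0 : V 0 = 1) (hV1 : V 1 = 1 + r * p 0)
    (hrec : ∀ j, 1 ≤ j → j ≤ N - 1 → V (j + 1) = 2 * V j - V (j - 1) + r * p j / V j) :
    V N ^ 2 ≥ 1 + r * ∑ i ∈ range N, p i ∧
    ∀ Δ : ℝ, 0 < Δ → Δ ≤ 1 / 2 → V N ^ 2 ≤ (1 / (1 - Δ)) ^ 2 →
      ∑ i ∈ range N, p i ≤ (1 / r) * ((1 / (1 - Δ)) ^ 2 - 1) :=
  distflow_total_power_bound_general N r hr p hp V hV0 hV1 hrec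
end

section
/- Define P(Δ) = 2(1−Δ)²·(∫_0^{√(ln(1/(1−Δ)))} exp(u²) du)² / (Δ(2−Δ)) for 0 < Δ ≤ 1/2. Then P is strictly decreasing on (0, 1/2], P(Δ) → 1 as Δ → 0⁺, and P(1/2) = (π/6)·erfi(√(ln 2))². -/
/-!
With `y = √(ln (1/(1-Δ)))`, so that `e^{y²} = 1/(1-Δ)`, the function `P` becomes
`Q(y) = 2 I(y)² / (e^{2y²} - 1)` with `I(y) = ∫₀^y e^{u²} du`, and `y` increases with `Δ`.
The sign of `Q'` is that of `2 y I(y) - (e^{y²} - e^{-y²})`; this difference vanishes at `0` and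
has derivative `2 (I(y) - y e^{-y²}) > 0` because `I(y) ≥ y`. The bounds `y ≤ I(y) ≤ y e^{y²}`
squeeze `Q(y)` between `e^{-2y²}` and `e^{2y²}`, which gives the limit `1`.
-/

open Real Set Filter Topology

lemma continuous_exp_sq : Continuous fun u : ℝ => exp (u ^ 2) := by fun_prop

noncomputable def integralExpSq (y : ℝ) : ℝ := ∫ u in (0:ℝ)..y, exp (u ^ 2)

lemma hasDerivAt_integralExpSq (y : ℝ) : HasDerivAt integralExpSq (exp (y ^ 2)) y :=
  (continuous_exp_sq.integral_hasStrictDerivAt 0 y).hasDerivAt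

lemma le_integralExpSq {y : ℝ} (hy : 0 ≤ y) : y ≤ integralExpSq y := by
  have h : ∫ _ in (0:ℝ)..y, (1:ℝ) ≤ integralExpSq y :=
    intervalIntegral.integral_mono_on hy intervalIntegrable_const
      (continuous_exp_sq.intervalIntegrable _ _)
      fun u _ => one_le_exp (sq_nonneg u)
  simpa using h

lemma integralExpSq_le {y : ℝ} (hy : 0 ≤ y) : integralExpSq y ≤ y * exp (y ^ 2) := by
  have h : integralExpSq y ≤ ∫ _ in (0:ℝ)..y, exp (y ^ 2) :=
    intervalIntegral.integral_mono_on hy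
      (continuous_exp_sq.intervalIntegrable _ _)
      intervalIntegrable_const
      fun u hu => exp_le_exp.mpr (pow_le_pow_left₀ hu.1 hu.2 2)
  simpa using h

lemma integralExpSq_pos {y : ℝ} (hy : 0 < y) : 0 < integralExpSq y :=
  hy.trans_le (le_integralExpSq hy.le)

lemma exp_sq_sub_exp_neg_sq_lt {y : ℝ} (hy : 0 < y) :
    exp (y ^ 2) - exp (-y ^ 2) < 2 * y * integralExpSq y := by
  let f : ℝ → ℝ := fun y => 2 * y * integralExpSq y - exp (y ^ 2) + exp (-y ^ 2)
  have hf : ∀ y, HasDerivAt f (2 * integralExpSq y - 2 * y * exp (-y ^ 2)) y := by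
    intro y
    have hsq : HasDerivAt (fun y : ℝ => y ^ 2) (2 * y) y := by simpa using hasDerivAt_pow 2 y
    refine (((((hasDerivAt_id y).const_mul 2).mul (hasDerivAt_integralExpSq y)).sub
      hsq.exp).add hsq.neg.exp).congr_deriv ?_
    simp only [id, Pi.neg_apply]
    ring
  have hf_mono : StrictMonoOn f (Ici 0) := by
    refine strictMonoOn_of_deriv_pos (convex_Ici 0)
      (fun x _ => (hf x).continuousAt.continuousWithinAt) fun x hx => ?_
    rw [interior_Ici, mem_Ioi] at hx
    have hexp : exp (-x ^ 2) < 1 := exp_lt_one_iff.mpr (neg_lt_zero.mpr (pow_pos hx 2))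
    rw [(hf x).deriv]
    nlinarith [le_integralExpSq hx.le, mul_lt_mul_of_pos_left hexp hx]
  have hf0 : f 0 = 0 := by simp [f, integralExpSq]
  have h := hf_mono self_mem_Ici hy.le hy
  simp only [hf0, f] at h
  linarith

noncomputable def expSqRatio (y : ℝ) : ℝ := 2 * integralExpSq y ^ 2 / (exp (2 * y ^ 2) - 1)

lemma exp_two_mul_sq_sub_one_pos {y : ℝ} (hy : 0 < y) : 0 < exp (2 * y ^ 2) - 1 :=
  sub_pos.mpr (one_lt_exp_iff.mpr (by positivity))

lemma hasDerivAt_expSqRatio {y : ℝ} (hy : 0 < y) :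
    HasDerivAt expSqRatio
      ((4 * integralExpSq y * exp (y ^ 2) * (exp (2 * y ^ 2) - 1)
        - 2 * integralExpSq y ^ 2 * (exp (2 * y ^ 2) * (4 * y))) / (exp (2 * y ^ 2) - 1) ^ 2) y := by
  have hnum : HasDerivAt (fun y => 2 * integralExpSq y ^ 2)
      (4 * integralExpSq y * exp (y ^ 2)) y :=
    (((hasDerivAt_integralExpSq y).pow 2).const_mul 2).congr_deriv (by ring)
  have hden : HasDerivAt (fun y : ℝ => exp (2 * y ^ 2) - 1) (exp (2 * y ^ 2) * (4 * y)) y :=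
    ((((hasDerivAt_pow 2 y).const_mul 2).exp).sub_const 1).congr_deriv (by ring)
  exact hnum.div hden (exp_two_mul_sq_sub_one_pos hy).ne'

lemma strictAntiOn_expSqRatio : StrictAntiOn expSqRatio (Ioi 0) := by
  refine strictAntiOn_of_deriv_neg (convex_Ioi 0)
    (fun y hy => (hasDerivAt_expSqRatio hy).continuousAt.continuousWithinAt) fun y hy => ?_
  rw [interior_Ioi] at hy
  rw [(hasDerivAt_expSqRatio hy).deriv]
  refine div_neg_of_neg_of_pos ?_ (pow_pos (exp_two_mul_sq_sub_one_pos hy) 2)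
  have hkey := exp_sq_sub_exp_neg_sq_lt hy
  have hI := integralExpSq_pos hy
  rw [show 2 * y ^ 2 = y ^ 2 + y ^ 2 by ring, exp_add, exp_neg] at *
  set E := exp (y ^ 2)
  have hE : 0 < E := exp_pos _
  have h : E * (E * E - 1) < 2 * y * integralExpSq y * (E * E) := by
    have h := mul_lt_mul_of_pos_left hkey (mul_pos hE hE)
    rwa [show E * E * (E - E⁻¹) = E * (E * E - 1) by field_simp, mul_comm (E * E)] at h
  nlinarith [mul_lt_mul_of_pos_left h (mul_pos four_pos hI)]

lemma exp_neg_two_mul_sq_le_expSqRatio {y : ℝ} (hy : 0 < y) :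
    exp (-2 * y ^ 2) ≤ expSqRatio y := by
  rw [neg_mul, expSqRatio, le_div_iff₀ (exp_two_mul_sq_sub_one_pos hy)]
  calc exp (-(2 * y ^ 2)) * (exp (2 * y ^ 2) - 1) = 1 - exp (-(2 * y ^ 2)) := by
        rw [mul_sub, ← exp_add, neg_add_cancel, exp_zero, mul_one]
    _ ≤ 2 * y ^ 2 := by linarith [one_sub_le_exp_neg (2 * y ^ 2)]
    _ ≤ 2 * integralExpSq y ^ 2 := by
        gcongr
        exact le_integralExpSq hy.le

lemma expSqRatio_le_exp_two_mul_sq {y : ℝ} (hy : 0 < y) :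
    expSqRatio y ≤ exp (2 * y ^ 2) := by
  rw [expSqRatio, div_le_iff₀ (exp_two_mul_sq_sub_one_pos hy)]
  calc 2 * integralExpSq y ^ 2 ≤ 2 * (y * exp (y ^ 2)) ^ 2 := by
        gcongr
        · exact (integralExpSq_pos hy).le
        · exact integralExpSq_le hy.le
    _ = 2 * y ^ 2 * exp (2 * y ^ 2) := by rw [mul_pow, ← exp_nat_mul]; push_cast; ring
    _ ≤ exp (2 * y ^ 2) * (exp (2 * y ^ 2) - 1) := by
        rw [mul_comm (exp _)]
        gcongr
        linarith [add_one_le_exp (2 * y ^ 2)]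

lemma tendsto_expSqRatio_nhdsGT_zero : Tendsto expSqRatio (𝓝[>] 0) (𝓝 1) := by
  have hlim : ∀ c : ℝ, Tendsto (fun y : ℝ => exp (c * y ^ 2)) (𝓝[>] 0) (𝓝 1) := fun c => by
    simpa using ((by fun_prop : Continuous fun y : ℝ => exp (c * y ^ 2)).tendsto 0).mono_left
      nhdsWithin_le_nhds
  refine tendsto_of_tendsto_of_tendsto_of_le_of_le' (hlim (-2)) (hlim 2) ?_ ?_
  · filter_upwards [self_mem_nhdsWithin] with y hy using exp_neg_two_mul_sq_le_expSqRatio hy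
  · filter_upwards [self_mem_nhdsWithin] with y hy using expSqRatio_le_exp_two_mul_sq hy

noncomputable def sqrtLogInvOneSub (Δ : ℝ) : ℝ := √(log (1 / (1 - Δ)))

lemma one_le_one_div_one_sub {Δ : ℝ} (h0 : 0 ≤ Δ) (h1 : Δ < 1) : 1 ≤ 1 / (1 - Δ) := by
  rw [le_div_iff₀ (sub_pos.mpr h1)]
  linarith

lemma exp_sq_sqrtLogInvOneSub {Δ : ℝ} (h0 : 0 ≤ Δ) (h1 : Δ < 1) :
    exp (sqrtLogInvOneSub Δ ^ 2) = 1 / (1 - Δ) := by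
  rw [sqrtLogInvOneSub, sq_sqrt (log_nonneg (one_le_one_div_one_sub h0 h1)),
    exp_log (one_div_pos.mpr (sub_pos.mpr h1))]

lemma sqrtLogInvOneSub_pos {Δ : ℝ} (h0 : 0 < Δ) (h1 : Δ < 1) : 0 < sqrtLogInvOneSub Δ := by
  refine sqrt_pos.mpr (log_pos ?_)
  rw [lt_div_iff₀ (sub_pos.mpr h1)]
  linarith

lemma strictMonoOn_sqrtLogInvOneSub : StrictMonoOn sqrtLogInvOneSub (Ioo 0 1) := by
  intro a ha b hb hab
  refine sqrt_lt_sqrt (log_nonneg (one_le_one_div_one_sub ha.1.le ha.2)) (log_lt_log ?_ ?_)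
  · exact one_div_pos.mpr (sub_pos.mpr ha.2)
  · exact one_div_lt_one_div_of_lt (sub_pos.mpr hb.2) (by linarith)

lemma tendsto_sqrtLogInvOneSub_nhdsGT_zero :
    Tendsto sqrtLogInvOneSub (𝓝[>] 0) (𝓝[>] 0) := by
  have hcont : ContinuousAt sqrtLogInvOneSub 0 := by
    unfold sqrtLogInvOneSub
    fun_prop (disch := norm_num)
  refine tendsto_nhdsWithin_iff.mpr ⟨?_, ?_⟩
  · simpa [sqrtLogInvOneSub] using hcont.tendsto.mono_left nhdsWithin_le_nhds
  · filter_upwards [Ioo_mem_nhdsGT one_pos] with Δ hΔ using sqrtLogInvOneSub_pos hΔ.1 hΔ.2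

lemma expSqRatio_sqrtLogInvOneSub {Δ : ℝ} (h0 : 0 < Δ) (h1 : Δ < 1) :
    expSqRatio (sqrtLogInvOneSub Δ) =
      2 * (1 - Δ) ^ 2 * integralExpSq (sqrtLogInvOneSub Δ) ^ 2 / (Δ * (2 - Δ)) := by
  have h1Δ : 1 - Δ ≠ 0 := (sub_pos.mpr h1).ne'
  have h2Δ : 2 - Δ ≠ 0 := by linarith
  have hden : exp (2 * sqrtLogInvOneSub Δ ^ 2) - 1 = Δ * (2 - Δ) / (1 - Δ) ^ 2 := by
    rw [two_mul, exp_add, exp_sq_sqrtLogInvOneSub h0.le h1]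
    field_simp
    ring
  rw [expSqRatio, hden]
  field_simp [h0.ne']

open Real in
/-- The ratio `P(Δ) = 2(1-Δ)² (∫_0^{√(ln(1/(1-Δ)))} e^{u²} du)² / (Δ(2-Δ))` of critical
arrival rates is strictly decreasing on `(0, 1/2]`, tends to `1` as `Δ → 0⁺`, and equals
`(π/6) erfi(√(ln 2))²` at `Δ = 1/2`. -/
theorem P_strictly_decreasing
    (P : ℝ → ℝ)
    (hP : ∀ Δ, P Δ = 2 * (1 - Δ) ^ 2 *
      (∫ u in (0:ℝ)..Real.sqrt (Real.log (1 / (1 - Δ))), Real.exp (u ^ 2)) ^ 2 /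
      (Δ * (2 - Δ)))
    (erfi : ℝ → ℝ)
    (herfi : ∀ z, erfi z = 2 / Real.sqrt Real.pi * ∫ v in (0:ℝ)..z, Real.exp (v ^ 2)) :
    StrictAntiOn P (Set.Ioc 0 (1 / 2)) ∧
    Filter.Tendsto P (nhdsWithin 0 (Set.Ioi 0)) (nhds 1) ∧
    P (1 / 2) = Real.pi / 6 * erfi (Real.sqrt (Real.log 2)) ^ 2 := by
  have hPQ : EqOn (expSqRatio ∘ sqrtLogInvOneSub) P (Ioo 0 1) := fun Δ hΔ =>
    (expSqRatio_sqrtLogInvOneSub hΔ.1 hΔ.2).trans (hP Δ).symm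
  have hsub : Ioc (0:ℝ) (1 / 2) ⊆ Ioo 0 1 := Ioc_subset_Ioo_right (by norm_num)
  refine ⟨?_, ?_, ?_⟩
  · exact ((strictAntiOn_expSqRatio.comp_strictMonoOn strictMonoOn_sqrtLogInvOneSub
      fun Δ hΔ => sqrtLogInvOneSub_pos hΔ.1 hΔ.2).mono hsub).congr (hPQ.mono hsub)
  · refine (tendsto_expSqRatio_nhdsGT_zero.comp tendsto_sqrtLogInvOneSub_nhdsGT_zero).congr' ?_
    filter_upwards [Ioo_mem_nhdsGT one_pos] with Δ hΔ using hPQ hΔ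
  · have hπ : √π ^ 2 = π := sq_sqrt pi_pos.le
    rw [hP, herfi, show (1:ℝ) / (1 - 1 / 2) = 2 by norm_num, mul_pow, div_pow, hπ]
    field_simp
    ring
end

section
/- Let Y_0 = 0, Y_1 = 1 and Y_{n+1} − 2Y_n + Y_{n−1} = 1/V_n − k_N·Y_n/V_n² for n = 1,…,N−1, where (V_n) is the Distflow voltage sequence with parameter k_N = a/N² and 0 < a < 2N/(N−1). Then the sequence Y_0, Y_1, …, Y_N is positive (for n ≥ 1), strictly increasing, and convex, and satisfies Y_{n+1} ≤ (n+1)(n+2)/2. -/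
/-- The Newton-derivative sequence `Y` for the Distflow recursion, with `Y 0 = 0`, `Y 1 = 1`
and `Y_{n+1} - 2Y_n + Y_{n-1} = 1/V_n - k_N Y_n / V_n²` for `n = 1, …, N-1`, where
`k_N = a/N²` and `0 < a < 2N/(N-1)`, is positive, strictly increasing, convex, and
satisfies `Y_{n+1} ≤ (n+1)(n+2)/2`. -/
theorem newton_derivative_sequence (N : ℕ) (hN : 2 ≤ N)
    (a : ℝ) (ha : 0 < a) (ha' : a < 2 * N / (N - 1))
    (k : ℝ) (hk : k = a / (N : ℝ) ^ 2)
    (V : ℕ → ℝ)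
    (hV0 : V 0 = 1) (hV1 : V 1 = 1 + k)
    (hVrec : ∀ n, 1 ≤ n → n ≤ N - 1 → V (n + 1) = 2 * V n - V (n - 1) + k / V n)
    (Y : ℕ → ℝ)
    (hY0 : Y 0 = 0) (hY1 : Y 1 = 1)
    (hYrec : ∀ n, 1 ≤ n → n ≤ N - 1 →
      Y (n + 1) - 2 * Y n + Y (n - 1) = 1 / V n - k * Y n / V n ^ 2) :
    (∀ n, 1 ≤ n → n ≤ N → 0 < Y n) ∧
    (∀ n, n < N → Y n < Y (n + 1)) ∧
    (∀ n, 1 ≤ n → n ≤ N - 1 → Y (n + 1) - 2 * Y n + Y (n - 1) ≥ 0) ∧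
    (∀ n, n < N → Y (n + 1) ≤ (n + 1) * (n + 2) / 2) := by
  have hNR : (2:ℝ) ≤ (N:ℝ) := by exact_mod_cast hN
  have hNpos : (0:ℝ) < (N:ℝ) := by linarith
  have hk0 : 0 < k := by rw [hk]; positivity
  have hkey : ∀ m : ℕ, m < N → k * ((m:ℝ) * ((m:ℝ) + 1) / 2) < 1 := by
    intro m hm
    have hm' : (m:ℝ) + 1 ≤ (N:ℝ) := by exact_mod_cast hm
    have hm0 : (0:ℝ) ≤ (m:ℝ) := Nat.cast_nonneg m
    have h1 : (0:ℝ) < (N:ℝ) - 1 := by linarith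
    have h2 : a * ((N:ℝ) - 1) < 2 * N := (lt_div_iff₀ h1).mp ha'
    rw [hk, div_mul_eq_mul_div, div_lt_one (by positivity)]
    nlinarith [mul_le_mul_of_nonneg_left hm' (mul_nonneg ha.le hm0),
      mul_le_mul_of_nonneg_right (show (m:ℝ) ≤ (N:ℝ) - 1 by linarith)
        (mul_pos ha (by linarith : (0:ℝ) < (m:ℝ) + 1)).le]
  have hV : ∀ n : ℕ, n < N → 1 ≤ V n ∧ V n < V (n + 1) := by
    intro n
    induction n with
    | zero =>
      intro _
      refine ⟨le_of_eq hV0.symm, ?_⟩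
      rw [hV0, hV1]; linarith
    | succ m ih =>
      intro h
      obtain ⟨h1, h2⟩ := ih (by omega)
      have hV1m : 1 ≤ V (m + 1) := by linarith
      have hrec := hVrec (m + 1) (by omega) (by omega)
      simp only [Nat.add_sub_cancel] at hrec
      refine ⟨hV1m, ?_⟩
      have hdiv : 0 < k / V (m + 1) := div_pos hk0 (by linarith)
      rw [hrec]; linarith
  -- the defect term
  have hd : ∀ m : ℕ, 1 ≤ m → m < N → 0 ≤ Y m → Y m ≤ (m:ℝ) * ((m:ℝ) + 1) / 2 →
      0 ≤ 1 / V m - k * Y m / V m ^ 2 ∧ 1 / V m - k * Y m / V m ^ 2 ≤ 1 := by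
    intro m _ hmN hY0' hYb
    have hVm : 1 ≤ V m := (hV m hmN).1
    have hVpos : 0 < V m := by linarith
    have hkm := hkey m hmN
    have hkY : k * Y m ≤ V m := by
      have := mul_le_mul_of_nonneg_left hYb hk0.le
      linarith
    have e : 1 / V m - k * Y m / V m ^ 2 = (V m - k * Y m) / V m ^ 2 := by
      field_simp
    constructor
    · rw [e]
      exact div_nonneg (by linarith) (by positivity)
    · have h1 : 1 / V m ≤ 1 := by
        rw [div_le_one hVpos]; exact hVm
      have h2 : 0 ≤ k * Y m / V m ^ 2 := by positivity
      linarith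
  have hP : ∀ n : ℕ, n < N →
      0 ≤ Y n ∧ Y n ≤ (n:ℝ) * ((n:ℝ) + 1) / 2 ∧ Y n < Y (n + 1) ∧
        Y (n + 1) - Y n ≤ (n:ℝ) + 1 := by
    intro n
    induction n with
    | zero =>
      intro _
      rw [hY0, hY1]; norm_num
    | succ m ih =>
      intro h
      obtain ⟨h0, h1, h2, h3⟩ := ih (by omega)
      have hYm1 : 0 ≤ Y (m + 1) := by linarith
      have hYm1b : Y (m + 1) ≤ ((m:ℕ):ℝ) * ((m:ℝ) + 1) / 2 + ((m:ℝ) + 1) := by linarith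
      have hYb : Y (m + 1) ≤ ((m + 1 : ℕ):ℝ) * (((m + 1 : ℕ):ℝ) + 1) / 2 := by
        push_cast; nlinarith
      obtain ⟨hd1, hd2⟩ := hd (m + 1) (by omega) h hYm1 hYb
      have hrec := hYrec (m + 1) (by omega) (by omega)
      simp only [Nat.add_sub_cancel] at hrec
      refine ⟨hYm1, hYb, ?_, ?_⟩
      · linarith
      · push_cast; linarith
  refine ⟨?_, ?_, ?_, ?_⟩
  · intro n h1 h2
    obtain ⟨m, rfl⟩ : ∃ m, n = m + 1 := ⟨n - 1, by omega⟩
    obtain ⟨p0, _, p2, _⟩ := hP m (by omega)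
    linarith
  · intro n h
    exact (hP n h).2.2.1
  · intro n h1 h2
    obtain ⟨p0, p1, _, _⟩ := hP n (by omega)
    rw [hYrec n h1 h2]
    exact (hd n h1 (by omega) p0 p1).1
  · intro n h
    obtain ⟨p0, p1, p2, p3⟩ := hP n h
    push_cast
    nlinarith
end

section
/- Let a ≥ 0 and let V : [0,1] → ℝ be continuous with V ≥ 1 satisfying V(t) = 1 + a·∫_0^t ∫_0^x (1/V(y)) dy dx. For each N, let V̄_N : [0,1] → ℝ with V̄_N ≥ 1 satisfy V̄_N(t) = 1 + a·∫_0^t ∫_0^s (1/V̄_N(u)) du ds + R̄_N(t), where sup_{0≤t≤1} |R̄_N(t)| → 0 as N → ∞. Then sup_{0≤t≤1} |V̄_N(t) − V(t)| → 0 as N → ∞. -/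
/-!
Since `x ↦ 1 / x` is 1-Lipschitz on `[1, ∞)`, subtracting the two integral equations gives
`|V̄_N - V|(t) ≤ ε_N + a ∫₀ᵗ ∫₀ˢ |1/V̄_N - 1/V|` with `ε_N = sup |R̄_N|`. On `[0, 1]` the double
integral of a nonnegative function is at most the single one, so Grönwall's inequality applied to
`|1/V̄_N - 1/V|` gives `|V̄_N - V| ≤ ε_N e^a` on `[0, 1]`.
-/

open MeasureTheory intervalIntegral Set Real Filter Topology

theorem continuousOn_primitive_interval_Icc {f : ℝ → ℝ} {a b : ℝ}
    (hf : IntegrableOn f (Icc a b)) :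
    ContinuousOn (fun x => ∫ t in a..x, f t) (Icc a b) := by
  rcases le_or_gt a b with hab | hba
  · exact (continuousOn_primitive_interval (by rwa [uIcc_of_le hab])).mono Icc_subset_uIcc
  · simp [Icc_eq_empty_of_lt hba]

theorem add_mul_gronwallBound_zero (ε K x : ℝ) :
    ε + K * gronwallBound 0 K ε x = ε * exp (K * x) := by
  rcases eq_or_ne K 0 with rfl | hK
  · simp
  · rw [gronwallBound_of_K_ne_0 hK]
    field_simp
    ring

theorem le_mul_exp_of_le_add_mul_integral {g : ℝ → ℝ} {ε K T : ℝ} (hK : 0 ≤ K)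
    (hg : ContinuousOn g (Icc 0 T)) (hle : ∀ t ∈ Icc 0 T, g t ≤ ε + K * ∫ s in 0..t, g s) :
    ∀ t ∈ Icc 0 T, g t ≤ ε * exp (K * t) := by
  have hderiv : ∀ x ∈ Ico 0 T, HasDerivWithinAt (fun t => ∫ s in 0..t, g s) (g x) (Ici x) x := by
    intro x hx
    have hIcc : Icc 0 T ∈ 𝓝[>] x := Icc_mem_nhdsGT_of_mem hx
    exact integral_hasDerivWithinAt_right
      ((hg.mono (Icc_subset_Icc_right hx.2.le)).intervalIntegrable_of_Icc hx.1)
      ((hg.stronglyMeasurableAtFilter_nhdsWithin measurableSet_Icc x).filter_mono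
        (nhdsWithin_le_of_mem hIcc))
      ((hg x (Ico_subset_Icc_self hx)).mono_of_mem_nhdsWithin hIcc)
  have hprim : ∀ t ∈ Icc 0 T, ∫ s in 0..t, g s ≤ gronwallBound 0 K ε (t - 0) :=
    le_gronwallBound_of_liminf_deriv_right_le (f' := g)
      (continuousOn_primitive_interval_Icc hg.integrableOn_Icc)
      (fun x hx _ hr => (hderiv x hx).liminf_right_slope_le hr) (by simp)
      (fun x hx => by linarith [hle x (Ico_subset_Icc_self hx)])
  intro t ht
  calc g t ≤ ε + K * ∫ s in 0..t, g s := hle t ht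
    _ ≤ ε + K * gronwallBound 0 K ε t := by grw [hprim t ht, sub_zero]
    _ = ε * exp (K * t) := add_mul_gronwallBound_zero ε K t

/-- The majorant `ε + K ∫₀ᵗ φ` is continuous even when `φ` is not, and satisfies the same
inequality, so the continuous case applies to it. -/
theorem add_mul_integral_le_mul_exp_of_le_add_mul_integral {φ : ℝ → ℝ} {ε K T : ℝ} (hK : 0 ≤ K)
    (hφ : IntegrableOn φ (Icc 0 T)) (hle : ∀ t ∈ Icc 0 T, φ t ≤ ε + K * ∫ s in 0..t, φ s) :
    ∀ t ∈ Icc 0 T, ε + K * ∫ s in 0..t, φ s ≤ ε * exp (K * t) := by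
  have hψ : ContinuousOn (fun t => ε + K * ∫ s in 0..t, φ s) (Icc 0 T) :=
    continuousOn_const.add (continuousOn_const.mul (continuousOn_primitive_interval_Icc hφ))
  refine le_mul_exp_of_le_add_mul_integral hK hψ fun t ht => ?_
  have hsub : Icc 0 t ⊆ Icc 0 T := Icc_subset_Icc_right ht.2
  gcongr
  refine integral_mono_on ht.1 ?_ ((hψ.mono hsub).intervalIntegrable_of_Icc ht.1)
    fun s hs => hle s (hsub hs)
  rw [intervalIntegrable_iff_integrableOn_Icc_of_le ht.1]
  exact hφ.mono_set hsub

theorem integral_integral_le_integral_of_nonneg {φ : ℝ → ℝ} {t : ℝ} (ht : t ∈ Icc (0 : ℝ) 1)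
    (hφ : IntegrableOn φ (Icc 0 t)) (hφ0 : ∀ u ∈ Icc 0 t, 0 ≤ φ u) :
    ∫ s in 0..t, ∫ u in 0..s, φ u ≤ ∫ s in 0..t, φ s := by
  have hφi : IntervalIntegrable φ volume 0 t :=
    (intervalIntegrable_iff_integrableOn_Icc_of_le ht.1).2 hφ
  have hI0 : 0 ≤ ∫ s in 0..t, φ s := integral_nonneg ht.1 hφ0
  calc ∫ s in 0..t, ∫ u in 0..s, φ u ≤ ∫ s in 0..t, ∫ u in 0..t, φ u := by
        refine integral_mono_on ht.1
          ((continuousOn_primitive_interval_Icc hφ).intervalIntegrable_of_Icc ht.1)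
          intervalIntegrable_const fun s hs => integral_mono_interval le_rfl hs.1 hs.2 ?_ hφi
        exact (ae_restrict_iff' measurableSet_Ioc).2
          (Eventually.of_forall fun u hu => hφ0 u (Ioc_subset_Icc_self hu))
    _ = t * ∫ s in 0..t, φ s := by simp
    _ ≤ ∫ s in 0..t, φ s := mul_le_of_le_one_left hI0 ht.2

theorem abs_integral_integral_sub_le {f g : ℝ → ℝ} {t : ℝ} (ht : 0 ≤ t)
    (hf : IntegrableOn f (Icc 0 t)) (hg : IntegrableOn g (Icc 0 t)) :
    |(∫ s in 0..t, ∫ u in 0..s, f u) - ∫ s in 0..t, ∫ u in 0..s, g u|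
      ≤ ∫ s in 0..t, ∫ u in 0..s, |f u - g u| := by
  have hii : ∀ {h : ℝ → ℝ}, IntegrableOn h (Icc 0 t) → ∀ s ∈ Icc 0 t,
      IntervalIntegrable h volume 0 s := fun hh s hs =>
    (intervalIntegrable_iff_integrableOn_Icc_of_le hs.1).2 (hh.mono_set (Icc_subset_Icc_right hs.2))
  have hprim : ∀ {h : ℝ → ℝ}, IntegrableOn h (Icc 0 t) →
      IntervalIntegrable (fun s => ∫ u in 0..s, h u) volume 0 t := fun hh =>
    (continuousOn_primitive_interval_Icc hh).intervalIntegrable_of_Icc ht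
  rw [← integral_sub (hprim hf) (hprim hg)]
  refine (abs_integral_le_integral_abs ht).trans <|
    integral_mono_on ht ((hprim hf).sub (hprim hg)).abs (hprim (hf.sub hg).abs) fun s hs => ?_
  rw [← integral_sub (hii hf s hs) (hii hg s hs)]
  exact abs_integral_le_integral_abs hs.1

theorem abs_one_div_sub_one_div_le {x y : ℝ} (hx : 1 ≤ x) (hy : 1 ≤ y) :
    |1 / x - 1 / y| ≤ |x - y| := by
  have hxy : 1 ≤ x * y := one_le_mul_of_one_le_of_one_le hx hy
  rw [div_sub_div _ _ (by linarith) (by linarith), one_mul, mul_one, abs_div,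
    abs_of_pos (by linarith : 0 < x * y), abs_sub_comm]
  exact div_le_self (abs_nonneg _) hxy

theorem abs_sub_le_mul_exp_of_integral_eq {a ε : ℝ} (ha : 0 ≤ a) {V W R : ℝ → ℝ}
    (hV_cont : ContinuousOn V (Icc 0 1)) (hV1 : ∀ t ∈ Icc (0 : ℝ) 1, 1 ≤ V t)
    (hV : ∀ t ∈ Icc (0 : ℝ) 1, V t = 1 + a * ∫ s in 0..t, ∫ u in 0..s, 1 / V u)
    (hW_meas : Measurable W) (hW1 : ∀ t ∈ Icc (0 : ℝ) 1, 1 ≤ W t)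
    (hW : ∀ t ∈ Icc (0 : ℝ) 1, W t = 1 + a * (∫ s in 0..t, ∫ u in 0..s, 1 / W u) + R t)
    (hR : ∀ t ∈ Icc (0 : ℝ) 1, |R t| ≤ ε) :
    ∀ t ∈ Icc (0 : ℝ) 1, |W t - V t| ≤ ε * exp a := by
  have hWi : IntegrableOn (fun u => 1 / W u) (Icc 0 1) := by
    refine Measure.integrableOn_of_bounded (M := 1) (by simp)
      (hW_meas.const_div 1).aestronglyMeasurable ?_
    refine (ae_restrict_iff' measurableSet_Icc).2 (Eventually.of_forall fun u hu => ?_)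
    rw [norm_div, norm_one, Real.norm_of_nonneg (by linarith [hW1 u hu])]
    exact div_le_one_of_le₀ (hW1 u hu) (by linarith [hW1 u hu])
  have hVi : IntegrableOn (fun u => 1 / V u) (Icc 0 1) :=
    (continuousOn_const.div hV_cont fun u hu => by linarith [hV1 u hu]).integrableOn_Icc
  -- Grönwall runs on `|1/W - 1/V| ≤ 1` because `W` itself need not be integrable.
  have hφ : IntegrableOn (fun u => |1 / W u - 1 / V u|) (Icc 0 1) := (hWi.sub hVi).abs
  have hdiff : ∀ t ∈ Icc (0 : ℝ) 1, |W t - V t| ≤ ε + a * ∫ s in 0..t, |1 / W s - 1 / V s| := by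
    intro t ht
    have hsub : Icc 0 t ⊆ Icc 0 1 := Icc_subset_Icc_right ht.2
    calc |W t - V t|
        = |a * ((∫ s in 0..t, ∫ u in 0..s, 1 / W u) - ∫ s in 0..t, ∫ u in 0..s, 1 / V u)
            + R t| := by
          rw [hW t ht, hV t ht]; ring_nf
      _ ≤ a * (∫ s in 0..t, ∫ u in 0..s, |1 / W u - 1 / V u|) + ε := by
          grw [abs_add_le, abs_mul, abs_of_nonneg ha, hR t ht,
            abs_integral_integral_sub_le ht.1 (hWi.mono_set hsub) (hVi.mono_set hsub)]
      _ ≤ ε + a * ∫ s in 0..t, |1 / W s - 1 / V s| := by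
          linarith [mul_le_mul_of_nonneg_left (integral_integral_le_integral_of_nonneg ht
            (hφ.mono_set hsub) fun u _ => abs_nonneg _) ha]
  have hgronwall := add_mul_integral_le_mul_exp_of_le_add_mul_integral ha hφ fun t ht =>
    (abs_one_div_sub_one_div_le (hW1 t ht) (hV1 t ht)).trans (hdiff t ht)
  intro t ht
  have hε : 0 ≤ ε := (abs_nonneg _).trans (hR t ht)
  calc |W t - V t| ≤ ε * exp (a * t) := (hdiff t ht).trans (hgronwall t ht)
    _ ≤ ε * exp a := by gcongr; exact mul_le_of_le_one_right ha ht.2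

theorem scaled_voltage_uniform_convergence_general (a : ℝ) (ha : 0 ≤ a)
    (V : ℝ → ℝ) (hV_cont : ContinuousOn V (Set.Icc (0:ℝ) 1))
    (hV1 : ∀ t ∈ Set.Icc (0:ℝ) 1, 1 ≤ V t)
    (hV : ∀ t ∈ Set.Icc (0:ℝ) 1,
      V t = 1 + a * ∫ x in (0:ℝ)..t, (∫ y in (0:ℝ)..x, 1 / V y))
    (Vb : ℕ → ℝ → ℝ) (R : ℕ → ℝ → ℝ)
    (hVb_meas : ∀ N, Measurable (Vb N))
    (hVb1 : ∀ N, ∀ t ∈ Set.Icc (0:ℝ) 1, 1 ≤ Vb N t)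
    (hVb : ∀ N, ∀ t ∈ Set.Icc (0:ℝ) 1,
      Vb N t = 1 + a * (∫ s in (0:ℝ)..t, (∫ u in (0:ℝ)..s, 1 / Vb N u)) + R N t)
    (hR : TendstoUniformlyOn R 0 Filter.atTop (Set.Icc (0:ℝ) 1)) :
    TendstoUniformlyOn Vb V Filter.atTop (Set.Icc (0:ℝ) 1) := by
  rw [Metric.tendstoUniformlyOn_iff] at hR ⊢
  intro η hη
  have hε : 0 < η / (2 * exp a) := by positivity
  filter_upwards [hR _ hε] with N hN t ht
  have hRN : ∀ s ∈ Icc (0 : ℝ) 1, |R N s| ≤ η / (2 * exp a) := fun s hs => by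
    simpa [Real.dist_eq] using (hN s hs).le
  calc dist (V t) (Vb N t) = |Vb N t - V t| := by rw [Real.dist_eq, abs_sub_comm]
    _ ≤ η / (2 * exp a) * exp a :=
        abs_sub_le_mul_exp_of_integral_eq ha hV_cont hV1 hV (hVb_meas N) (hVb1 N) (hVb N) hRN t ht
    _ < η := by field_simp; linarith

/-- If `V` solves the limiting integral equation and each `V̄_N` solves it up to a remainder
`R̄_N` that tends to `0` uniformly on `[0,1]`, then `V̄_N → V` uniformly on `[0,1]`. -/
theorem scaled_voltage_uniform_convergence (a : ℝ) (ha : 0 ≤ a)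
    (V : ℝ → ℝ) (hV_cont : ContinuousOn V (Set.Icc (0:ℝ) 1))
    (hV1 : ∀ t ∈ Set.Icc (0:ℝ) 1, 1 ≤ V t)
    (hV : ∀ t ∈ Set.Icc (0:ℝ) 1,
      V t = 1 + a * ∫ x in (0:ℝ)..t, (∫ y in (0:ℝ)..x, 1 / V y))
    (Vb : ℕ → ℝ → ℝ) (R : ℕ → ℝ → ℝ)
    (hVb_meas : ∀ N, Measurable (Vb N))
    (hVb_bdd : ∀ N, ∃ M, ∀ t ∈ Set.Icc (0:ℝ) 1, |Vb N t| ≤ M)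
    (hVb1 : ∀ N, ∀ t ∈ Set.Icc (0:ℝ) 1, 1 ≤ Vb N t)
    (hVb : ∀ N, ∀ t ∈ Set.Icc (0:ℝ) 1,
      Vb N t = 1 + a * (∫ s in (0:ℝ)..t, (∫ u in (0:ℝ)..s, 1 / Vb N u)) + R N t)
    (hR : TendstoUniformlyOn R 0 Filter.atTop (Set.Icc (0:ℝ) 1)) :
    TendstoUniformlyOn Vb V Filter.atTop (Set.Icc (0:ℝ) 1) :=
  scaled_voltage_uniform_convergence_general a ha V hV_cont hV1 hV Vb R hVb_meas hVb1 hVb hR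
end
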